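/- arXiv:2108.13116 — 2 statements merged into one kernel-verified Lean document; each statement's English description precedes it below -/
import Mathlib

section
/- For $x \geq 2$ we have $\sum_{p \le x} \frac{\log p}{p} = \log x + O(1)$, where the sum runs over primes $p \le x$. -/
/-!
Legendre's formula writes `log n! = ∑_{p ≤ n} v_p(n!) log p` with `n/p - 1 < v_p(n!) ≤ n/(p - 1)`.
Since `log n! = n log n + O(n)`, the lower estimate, together with Chebyshev's bound
`∑_{p ≤ n} log p ≤ n log 4`, gives `∑_{p ≤ n} log p / p ≤ log n + log 4`; the upper one, since
`1/(p - 1) = 1/p + 1/(p(p - 1))` and `∑ log m / (m(m - 1))` converges, gives the reverse inequality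
up to a constant.
-/

open Real Finset
open scoped Nat

theorem log_factorial_eq_sum_factorization_mul_log (n : ℕ) :
    log (n ! : ℝ) = ∑ p ∈ Iic n with p.Prime, (n !).factorization p * log p := by
  rw [log_nat_eq_sum_factorization]
  refine Finsupp.sum_of_support_subset _ (fun p hp ↦ ?_) _ (fun _ _ ↦ by simp)
  rw [Nat.support_factorization] at hp
  have hpp := Nat.prime_of_mem_primeFactors hp
  exact mem_filter.2 ⟨mem_Iic.2 <| hpp.dvd_factorial.1 (Nat.dvd_of_mem_primeFactors hp), hpp⟩

theorem Nat.div_le_factorization_factorial {p : ℕ} (hp : p.Prime) (n : ℕ) :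
    n / p ≤ (n !).factorization p := by
  rw [Nat.factorization_factorial hp (b := Nat.log p n + 2) (by omega)]
  simpa using single_le_sum (f := fun i ↦ n / p ^ i) (fun _ _ ↦ Nat.zero_le _)
    (mem_Ico.2 ⟨le_rfl, by omega⟩ : 1 ∈ Ico 1 (Nat.log p n + 2))

theorem Nat.div_sub_one_lt_factorization_factorial {p : ℕ} (hp : p.Prime) (n : ℕ) :
    (n : ℝ) / p - 1 < (n !).factorization p :=
  calc (n : ℝ) / p - 1 < ⌊(n : ℝ) / p⌋₊ := by linarith [Nat.lt_floor_add_one ((n : ℝ) / p)]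
    _ = (n / p : ℕ) := by rw [Nat.floor_div_eq_div]
    _ ≤ _ := by exact_mod_cast div_le_factorization_factorial hp n

theorem Nat.factorization_factorial_le_div_sub_one {p : ℕ} (hp : p.Prime) (n : ℕ) :
    ((n !).factorization p : ℝ) ≤ n / (p - 1) := by
  have hp1 : (1 : ℝ) < p := by exact_mod_cast hp.one_lt
  have h : (p - 1) * (n !).factorization p ≤ n :=
    Nat.sub_one_mul_factorization_factorial hp ▸ Nat.sub_le _ _
  rw [le_div_iff₀ (by linarith)]
  calc ((n !).factorization p : ℝ) * (p - 1) = ((p - 1) * (n !).factorization p : ℕ) := by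
        push_cast [Nat.cast_sub hp.one_le]; ring
    _ ≤ n := by exact_mod_cast h

theorem log_div_mul_sub_one_nonneg (m : ℕ) : 0 ≤ log m / (m * (m - 1) : ℝ) := by
  rcases m.eq_zero_or_pos with rfl | hm
  · simp
  have hm1 : (1 : ℝ) ≤ m := by exact_mod_cast hm
  have := log_natCast_nonneg m
  have : (0 : ℝ) ≤ m - 1 := by linarith
  positivity

theorem summable_log_div_mul_sub_one : Summable fun m : ℕ ↦ log m / (m * (m - 1) : ℝ) := by
  refine .of_nonneg_of_le log_div_mul_sub_one_nonneg (fun m ↦ ?_)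
    ((summable_nat_rpow.2 (by norm_num : (1 / 2 : ℝ) - 2 < -1)).mul_left 4)
  rcases lt_or_ge m 2 with hm | hm
  · interval_cases m <;> simp [rpow_nonneg]
  have hm2 : (2 : ℝ) ≤ m := by exact_mod_cast hm
  have hlog : log m ≤ 2 * (m : ℝ) ^ (1 / 2 : ℝ) := by
    linarith [log_le_rpow_div (x := m) (by positivity) (by norm_num : (0 : ℝ) < 1 / 2)]
  have hs : 0 ≤ (m : ℝ) ^ (1 / 2 : ℝ) := by positivity
  rw [div_le_iff₀ (by nlinarith), rpow_sub (by positivity), rpow_two]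
  calc log m ≤ 2 * (m : ℝ) ^ (1 / 2 : ℝ) := hlog
    _ ≤ 4 * ((m : ℝ) ^ (1 / 2 : ℝ) / m ^ 2) * (m * (m - 1)) := by
      rw [mul_div_assoc', div_mul_eq_mul_div, le_div_iff₀ (by positivity)]
      nlinarith [mul_nonneg (mul_nonneg hs (by linarith : (0 : ℝ) ≤ m))
        (by linarith : (0 : ℝ) ≤ m - 2)]

theorem sum_primes_log_le_log_four_mul (n : ℕ) :
    ∑ p ∈ Iic n with p.Prime, log p ≤ log 4 * n := by
  have h := Chebyshev.theta_le_log4_mul_x (Nat.cast_nonneg n)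
  rwa [Chebyshev.theta_eq_sum_Icc, Nat.floor_natCast] at h

theorem log_factorial_le_mul_log (n : ℕ) : log (n ! : ℝ) ≤ n * log n := by
  rw [← log_pow]
  exact log_le_log (by positivity) (by exact_mod_cast Nat.factorial_le_pow n)

theorem mul_log_sub_le_log_factorial {n : ℕ} (hn : n ≠ 0) : n * log n - n ≤ log (n ! : ℝ) := by
  linarith [Stirling.le_log_factorial_stirling hn, log_natCast_nonneg n,
    log_nonneg (by linarith [pi_gt_three] : (1 : ℝ) ≤ 2 * π)]

theorem mul_sum_primes_log_div_sub_le_log_factorial (n : ℕ) :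
    n * ∑ p ∈ Iic n with p.Prime, log p / p - ∑ p ∈ Iic n with p.Prime, log p
      ≤ log (n ! : ℝ) := by
  rw [log_factorial_eq_sum_factorization_mul_log, mul_sum, ← sum_sub_distrib]
  refine sum_le_sum fun p hp ↦ ?_
  have hp := (mem_filter.1 hp).2
  have hp0 : (0 : ℝ) < p := by exact_mod_cast hp.pos
  calc n * (log p / p) - log p = (n / p - 1) * log p := by field_simp
    _ ≤ _ := mul_le_mul_of_nonneg_right (Nat.div_sub_one_lt_factorization_factorial hp n).le
      (log_natCast_nonneg p)

theorem log_factorial_le_mul_sum_primes_log_div_add (n : ℕ) :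
    log (n ! : ℝ) ≤ n * (∑ p ∈ Iic n with p.Prime, log p / p
      + ∑ p ∈ Iic n with p.Prime, log p / (p * (p - 1))) := by
  rw [log_factorial_eq_sum_factorization_mul_log, ← sum_add_distrib, mul_sum]
  refine sum_le_sum fun p hp ↦ ?_
  have hp := (mem_filter.1 hp).2
  have hp1 : (1 : ℝ) < p := by exact_mod_cast hp.one_lt
  calc _ ≤ n / (p - 1) * log p := mul_le_mul_of_nonneg_right
        (Nat.factorization_factorial_le_div_sub_one hp n) (log_natCast_nonneg p)
    _ = _ := by
      have : (p : ℝ) - 1 ≠ 0 := by linarith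
      field_simp
      ring

theorem sum_primes_log_div_le_log_add_log_four {n : ℕ} (hn : n ≠ 0) :
    ∑ p ∈ Iic n with p.Prime, log p / p ≤ log n + log 4 := by
  have hn0 : (0 : ℝ) < n := by exact_mod_cast Nat.pos_of_ne_zero hn
  refine le_of_mul_le_mul_left ?_ hn0
  linarith [mul_sum_primes_log_div_sub_le_log_factorial n, sum_primes_log_le_log_four_mul n,
    log_factorial_le_mul_log n]

theorem log_sub_le_sum_primes_log_div {n : ℕ} (hn : n ≠ 0) :
    log n - 1 - ∑' m : ℕ, log m / (m * (m - 1) : ℝ) ≤ ∑ p ∈ Iic n with p.Prime, log p / p := by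
  have hn0 : (0 : ℝ) < n := by exact_mod_cast Nat.pos_of_ne_zero hn
  have hK : ∑ p ∈ Iic n with p.Prime, log p / (p * (p - 1) : ℝ)
      ≤ ∑' m : ℕ, log m / (m * (m - 1) : ℝ) :=
    summable_log_div_mul_sub_one.sum_le_tsum _ fun m _ ↦ log_div_mul_sub_one_nonneg m
  refine le_of_mul_le_mul_left ?_ hn0
  nlinarith [mul_log_sub_le_log_factorial hn, log_factorial_le_mul_sum_primes_log_div_add n]

theorem log_le_log_natFloor_add_log_two {x : ℝ} (hx : 1 ≤ x) : log x ≤ log ⌊x⌋₊ + log 2 := by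
  have hn : (1 : ℝ) ≤ ⌊x⌋₊ := by exact_mod_cast Nat.one_le_floor_iff x |>.2 hx
  rw [← log_mul (by positivity) (by norm_num)]
  exact log_le_log (by linarith) (by linarith [Nat.lt_floor_add_one x])

/-- Mertens' first theorem: `∑_{p ≤ x} (log p)/p = log x + O(1)` for `x ≥ 2`. -/
theorem mertens_first :
    ∃ C : ℝ, 0 < C ∧ ∀ x : ℝ, 2 ≤ x →
      |(∑ p ∈ (Finset.Iic ⌊x⌋₊).filter Nat.Prime, Real.log p / p) - Real.log x| ≤ C := by
  set K := ∑' m : ℕ, log m / (m * (m - 1) : ℝ)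
  have hK : 0 ≤ K := tsum_nonneg log_div_mul_sub_one_nonneg
  have hlog : log 2 ≤ log 4 := log_le_log (by norm_num) (by norm_num)
  refine ⟨1 + K + log 4, by positivity, fun x hx ↦ abs_le.2 ?_⟩
  have hn : ⌊x⌋₊ ≠ 0 := (Nat.floor_pos.2 (by linarith)).ne'
  have hlog_floor : log ⌊x⌋₊ ≤ log x :=
    log_le_log (by positivity) (Nat.floor_le (by linarith))
  constructor <;> linarith [sum_primes_log_div_le_log_add_log_four hn,
    log_sub_le_sum_primes_log_div hn, log_le_log_natFloor_add_log_two (by linarith : 1 ≤ x)]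
end

section
/- Let $k > 0$ and let $I_1, \dots, I_J$ be disjoint finite sets of primes with associated positive integers $\ell_1, \dots, \ell_J$. For each $j$ let $b_j(n) = 1$ if all prime factors of $n$ lie in $I_j$ and $\Omega(n) \le \ell_j$, and $b_j(n)=0$ otherwise. Suppose $\sum_{p \in I_j} 1/p \le \ell_j / (8ek)$ for each $j$. Then $\prod_{j=1}^J \Big(\sum_{n_j} \frac{k^{\Omega(n_j)}}{g(n_j)\, n_j} b_j(n_j)\Big) \ge \prod_{j=1}^J (1 - 2^{-\ell_j/2}) \prod_{p \in \cup_j I_j} e^{k/p}$, where $g$ is the multiplicative function with $g(p^r) = 1/r!$. -/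
open Real Finset

/-- The multiplicative function with `g(p^r) = 1/r!`. -/
noncomputable def gfun (n : ℕ) : ℝ :=
  ∏ p ∈ n.primeFactors, (1 : ℝ) / (Nat.factorial (n.factorization p) : ℝ)

/-!
The weights `k ^ Ω n * g n / n` are multiplicative with Euler factor
`∑ r, (k / p) ^ r / r! = exp (k / p)`, so over the numbers composed of primes of `I` they
sum to `∏ p ∈ I, exp (k / p)`; since `g ≤ 1` they are bounded by the summands
`k ^ Ω n / (g n * n)` of the theorem. Rankin's trick (multiply by `2 ^ (Ω n - ℓ) ≥ 1`) bounds
the part with `Ω n > ℓ` by `2 ^ (-ℓ) * ∏ p ∈ I, exp (2k / p)`, and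
`k * ∑ 1 / p ≤ ℓ / (8e) ≤ ℓ * log 2 / 2` makes this at most `2 ^ (-ℓ / 2) * ∏ p ∈ I, exp (k / p)`.
Disjointness of the `I j` factors the product over `⋃ I j`.
-/

open scoped ArithmeticFunction.Omega Nat

open ArithmeticFunction (cardFactors_apply cardFactors_apply_prime_pow cardFactors_mul)

lemma gfun_eq_factorization_prod (n : ℕ) :
    gfun n = n.factorization.prod fun _ r ↦ (1 : ℝ) / r ! := by
  rw [Finsupp.prod, Nat.support_factorization]
  rfl

lemma gfun_pos (n : ℕ) : 0 < gfun n :=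
  prod_pos fun _ _ ↦ by positivity

lemma gfun_le_one (n : ℕ) : gfun n ≤ 1 :=
  prod_le_one (fun _ _ ↦ by positivity) fun _ _ ↦
    div_le_one_of_le₀ (Nat.one_le_cast.mpr (Nat.factorial_pos _)) (by positivity)

lemma gfun_mul_of_coprime {m n : ℕ} (h : m.Coprime n) : gfun (m * n) = gfun m * gfun n := by
  simp only [gfun_eq_factorization_prod, Nat.factorization_mul_of_coprime h]
  refine Finsupp.prod_add_index_of_disjoint ?_ _
  simpa only [Nat.support_factorization] using h.disjoint_primeFactors

lemma gfun_prime_pow {p : ℕ} (hp : p.Prime) (r : ℕ) : gfun (p ^ r) = 1 / r ! := by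
  rw [gfun_eq_factorization_prod, hp.factorization_pow, Finsupp.prod_single_index (by simp)]

noncomputable def eulerWeight (c : ℝ) (n : ℕ) : ℝ :=
  c ^ Ω n * gfun n / n

lemma eulerWeight_one (c : ℝ) : eulerWeight c 1 = 1 := by
  simp [eulerWeight, gfun]

lemma eulerWeight_nonneg {c : ℝ} (hc : 0 ≤ c) (n : ℕ) : 0 ≤ eulerWeight c n := by
  have := gfun_pos n
  unfold eulerWeight
  positivity

lemma eulerWeight_mul_of_coprime (c : ℝ) {m n : ℕ} (h : m.Coprime n) :
    eulerWeight c (m * n) = eulerWeight c m * eulerWeight c n := by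
  rcases eq_or_ne m 0 with rfl | hm
  · simp [eulerWeight, (Nat.coprime_zero_left n).mp h]
  rcases eq_or_ne n 0 with rfl | hn
  · simp [eulerWeight, (Nat.coprime_zero_right m).mp h]
  rw [eulerWeight, eulerWeight, eulerWeight, cardFactors_mul hm hn,
    gfun_mul_of_coprime h, pow_add, Nat.cast_mul]
  ring

lemma eulerWeight_prime_pow (c : ℝ) {p : ℕ} (hp : p.Prime) (r : ℕ) :
    eulerWeight c (p ^ r) = (c / p) ^ r / r ! := by
  rw [eulerWeight, cardFactors_apply_prime_pow hp, gfun_prime_pow hp, Nat.cast_pow]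
  ring

lemma eulerWeight_mul_left (a c : ℝ) (n : ℕ) :
    eulerWeight (a * c) n = a ^ Ω n * eulerWeight c n := by
  rw [eulerWeight, eulerWeight, mul_pow]
  ring

lemma eulerWeight_le_div_gfun {c : ℝ} (hc : 0 ≤ c) (n : ℕ) :
    eulerWeight c n ≤ c ^ Ω n / (gfun n * n) := by
  have hg := gfun_pos n
  calc eulerWeight c n ≤ c ^ Ω n * (gfun n)⁻¹ / n := by
        unfold eulerWeight
        gcongr
        exact (gfun_le_one n).trans ((one_le_inv₀ hg).mpr (gfun_le_one n))
    _ = c ^ Ω n / (gfun n * n) := by ring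

lemma eulerWeight_le_of_lt_cardFactors {c : ℝ} (hc : 0 ≤ c) {ℓ n : ℕ} (h : ℓ < Ω n) :
    eulerWeight c n ≤ eulerWeight (2 * c) n / 2 ^ ℓ := by
  rw [eulerWeight_mul_left, le_div_iff₀ (by positivity), mul_comm]
  exact mul_le_mul_of_nonneg_right (pow_le_pow_right₀ one_le_two h.le) (eulerWeight_nonneg hc n)

lemma hasSum_eulerWeight_factoredNumbers (c : ℝ) {I : Finset ℕ} (hI : ∀ p ∈ I, p.Prime) :
    HasSum (fun n : Nat.factoredNumbers I ↦ eulerWeight c n) (∏ p ∈ I, exp (c / p)) := by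
  have hfactor {p : ℕ} (hp : p.Prime) :
      HasSum (fun r ↦ eulerWeight c (p ^ r)) (exp (c / p)) := by
    simpa only [eulerWeight_prime_pow c hp, exp_eq_exp_ℝ] using
      NormedSpace.expSeries_div_hasSum_exp (c / p)
  have h := (EulerProduct.summable_and_hasSum_factoredNumbers_prod_filter_prime_tsum
    (eulerWeight_one c) (eulerWeight_mul_of_coprime c)
    (fun hp ↦ by simpa only [Real.norm_eq_abs] using (hfactor hp).summable.abs) I).2
  rwa [filter_true_of_mem hI, prod_congr rfl fun p hp ↦ (hfactor (hI p hp)).tsum_eq] at h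

lemma finite_setOf_mem_factoredNumbers_cardFactors_le (I : Finset ℕ) (ℓ : ℕ) :
    {n | n ∈ Nat.factoredNumbers I ∧ Ω n ≤ ℓ}.Finite := by
  refine (Set.finite_Iic ((I.sup id + 1) ^ ℓ)).subset fun n ⟨hn, hΩ⟩ ↦ ?_
  rw [Nat.mem_factoredNumbers] at hn
  rw [cardFactors_apply] at hΩ
  calc n = n.primeFactorsList.prod := (Nat.prod_primeFactorsList hn.1).symm
    _ ≤ (I.sup id + 1) ^ n.primeFactorsList.length :=
      List.prod_le_pow_card _ _ fun p hp ↦ (le_sup (f := id) (hn.2 p hp)).trans (Nat.le_succ _)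
    _ ≤ (I.sup id + 1) ^ ℓ := Nat.pow_le_pow_right (Nat.succ_pos _) hΩ

lemma sub_div_two_pow_le_tsum_eulerWeight {c : ℝ} (hc : 0 ≤ c) {I : Finset ℕ}
    (hI : ∀ p ∈ I, p.Prime) (ℓ : ℕ) :
    ∏ p ∈ I, exp (c / p) - (∏ p ∈ I, exp (2 * c / p)) / 2 ^ ℓ ≤
      ∑' n : {n | n ∈ Nat.factoredNumbers I ∧ Ω n ≤ ℓ}, eulerWeight c n := by
  set A := {n | n ∈ Nat.factoredNumbers I ∧ Ω n ≤ ℓ}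
  set F := (Nat.factoredNumbers I).indicator (eulerWeight c)
  set G := (Nat.factoredNumbers I).indicator (eulerWeight (2 * c))
  have hF : HasSum F (∏ p ∈ I, exp (c / p)) :=
    hasSum_subtype_iff_indicator.mp (hasSum_eulerWeight_factoredNumbers c hI)
  have hG : HasSum G (∏ p ∈ I, exp (2 * c / p)) :=
    hasSum_subtype_iff_indicator.mp (hasSum_eulerWeight_factoredNumbers (2 * c) hI)
  have hhead : ∑' n : A, F n = ∑' n : A, eulerWeight c n :=
    tsum_congr fun n ↦ Set.indicator_of_mem n.2.1 _
  have htail : ∑' n : ↥Aᶜ, F n ≤ (∏ p ∈ I, exp (2 * c / p)) / 2 ^ ℓ := by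
    have hGnonneg (n : ℕ) : 0 ≤ G n / 2 ^ ℓ :=
      div_nonneg (Set.indicator_nonneg (fun m _ ↦ eulerWeight_nonneg (by positivity) m) n)
        (by positivity)
    rw [← hG.tsum_eq, ← tsum_div_const]
    refine le_trans ?_ (Summable.tsum_subtype_le _ Aᶜ hGnonneg (hG.summable.div_const _))
    refine (hF.summable.subtype _).tsum_le_tsum (fun n ↦ ?_)
      ((hG.summable.div_const _).subtype _)
    by_cases hn : (n : ℕ) ∈ Nat.factoredNumbers I
    · have hlt : ℓ < Ω n := not_le.mp fun h ↦ n.2 ⟨hn, h⟩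
      simpa only [F, G, Set.indicator_of_mem hn] using eulerWeight_le_of_lt_cardFactors hc hlt
    · simp [F, G, hn]
  have hsplit : ∑' n : A, F n + ∑' n : ↥Aᶜ, F n = ∑' n, F n :=
    (hF.summable.subtype A).tsum_add_tsum_compl (hF.summable.subtype Aᶜ)
  linarith [hF.tsum_eq]

lemma prod_exp_two_mul_div_two_pow_le {k : ℝ} (hk : 0 < k) {I : Finset ℕ} {ℓ : ℕ}
    (hs : ∑ p ∈ I, (1 : ℝ) / p ≤ ℓ / (8 * exp 1 * k)) :
    (∏ p ∈ I, exp (2 * k / p)) / 2 ^ ℓ ≤ 2 ^ (-(ℓ : ℝ) / 2) * ∏ p ∈ I, exp (k / p) := by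
  set σ := ∑ p ∈ I, (1 : ℝ) / p
  have hprod (c : ℝ) : ∏ p ∈ I, exp (c / p) = exp (c * σ) := by
    rw [← exp_sum, mul_sum]
    simp_rw [mul_one_div]
  have hconst : 1 / (8 * exp 1) ≤ log 2 / 2 := by
    rw [div_le_div_iff₀ (by positivity) two_pos]
    nlinarith [exp_one_gt_d9, log_two_gt_d9]
  have hkσ : k * σ ≤ ℓ * log 2 / 2 := calc
    k * σ ≤ k * (ℓ / (8 * exp 1 * k)) := mul_le_mul_of_nonneg_left hs hk.le
    _ = ℓ * (1 / (8 * exp 1)) := by field_simp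
    _ ≤ ℓ * (log 2 / 2) := by gcongr
    _ = ℓ * log 2 / 2 := by ring
  rw [hprod, hprod, ← rpow_natCast, rpow_def_of_pos two_pos, rpow_def_of_pos two_pos,
    ← exp_sub, ← exp_add, exp_le_exp]
  linarith

lemma one_sub_two_rpow_mul_prod_exp_le_tsum {k : ℝ} (hk : 0 < k) {I : Finset ℕ}
    (hI : ∀ p ∈ I, p.Prime) {ℓ : ℕ} (hs : ∑ p ∈ I, (1 : ℝ) / p ≤ ℓ / (8 * exp 1 * k)) :
    (1 - 2 ^ (-(ℓ : ℝ) / 2)) * ∏ p ∈ I, exp (k / p) ≤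
      ∑' n : {n : ℕ // 0 < n ∧ (∀ p ∈ n.primeFactors, p ∈ I) ∧
          n.primeFactorsList.length ≤ ℓ},
        k ^ (n : ℕ).primeFactorsList.length / (gfun n * (n : ℕ)) := by
  have hset : {n | n ∈ Nat.factoredNumbers I ∧ Ω n ≤ ℓ} =
      {n : ℕ | 0 < n ∧ (∀ p ∈ n.primeFactors, p ∈ I) ∧ n.primeFactorsList.length ≤ ℓ} := by
    ext n
    simp [Nat.mem_factoredNumbers, cardFactors_apply, Nat.pos_iff_ne_zero, and_assoc]
  have := (finite_setOf_mem_factoredNumbers_cardFactors_le I ℓ).to_subtype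
  calc (1 - 2 ^ (-(ℓ : ℝ) / 2)) * ∏ p ∈ I, exp (k / p)
      ≤ ∏ p ∈ I, exp (k / p) - (∏ p ∈ I, exp (2 * k / p)) / 2 ^ ℓ := by
        linarith [prod_exp_two_mul_div_two_pow_le hk hs]
    _ ≤ ∑' n : {n | n ∈ Nat.factoredNumbers I ∧ Ω n ≤ ℓ}, eulerWeight k n :=
        sub_div_two_pow_le_tsum_eulerWeight hk.le hI ℓ
    _ ≤ ∑' n : {n | n ∈ Nat.factoredNumbers I ∧ Ω n ≤ ℓ}, k ^ Ω n / (gfun n * n) :=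
        Summable.tsum_le_tsum (fun n ↦ eulerWeight_le_div_gfun hk.le n) .of_finite .of_finite
    _ = _ := by
        rw [hset]
        simp only [cardFactors_apply]
        rfl

theorem product_truncated_sums_lower_bound_general (k : ℝ) (hk : 0 < k) (J : ℕ)
    (I : Fin J → Finset ℕ) (hI : ∀ j, ∀ p ∈ I j, p.Prime)
    (hdisj : ∀ j j' : Fin J, j ≠ j' → Disjoint (I j) (I j'))
    (ℓ : Fin J → ℕ)
    (hsum : ∀ j, ∑ p ∈ I j, (1 : ℝ) / p ≤ (ℓ j : ℝ) / (8 * Real.exp 1 * k)) :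
    (∏ j : Fin J, (1 - (2 : ℝ) ^ (-(ℓ j : ℝ) / 2))) *
        ∏ p ∈ Finset.univ.biUnion I, Real.exp (k / p) ≤
      ∏ j : Fin J,
        ∑' n : {n : ℕ // 0 < n ∧ (∀ p ∈ n.primeFactors, p ∈ I j) ∧
            n.primeFactorsList.length ≤ ℓ j},
          k ^ (n : ℕ).primeFactorsList.length / (gfun n * (n : ℕ)) := by
  rw [prod_biUnion fun j _ j' _ hjj' ↦ hdisj j j' hjj', ← prod_mul_distrib]
  refine prod_le_prod (fun j _ ↦ mul_nonneg ?_ (prod_nonneg fun p _ ↦ (exp_pos _).le))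
    fun j _ ↦ one_sub_two_rpow_mul_prod_exp_le_tsum hk (hI j) (hsum j)
  have hexp : -(ℓ j : ℝ) / 2 ≤ 0 := by
    have := (ℓ j).cast_nonneg (α := ℝ)
    linarith
  exact sub_nonneg.mpr (rpow_le_one_of_one_le_of_nonpos one_le_two hexp)

/-- Lower bound for a product of truncated Euler-type sums via Rankin's trick. -/
theorem product_truncated_sums_lower_bound (k : ℝ) (hk : 0 < k) (J : ℕ)
    (I : Fin J → Finset ℕ) (hI : ∀ j, ∀ p ∈ I j, p.Prime)
    (hdisj : ∀ j j' : Fin J, j ≠ j' → Disjoint (I j) (I j'))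
    (ℓ : Fin J → ℕ) (hℓ : ∀ j, 1 ≤ ℓ j)
    (hsum : ∀ j, ∑ p ∈ I j, (1 : ℝ) / p ≤ (ℓ j : ℝ) / (8 * Real.exp 1 * k)) :
    (∏ j : Fin J, (1 - (2 : ℝ) ^ (-(ℓ j : ℝ) / 2))) *
        ∏ p ∈ Finset.univ.biUnion I, Real.exp (k / p) ≤
      ∏ j : Fin J,
        ∑' n : {n : ℕ // 0 < n ∧ (∀ p ∈ n.primeFactors, p ∈ I j) ∧
            n.primeFactorsList.length ≤ ℓ j},
          k ^ (n : ℕ).primeFactorsList.length / (gfun n * (n : ℕ)) :=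
  product_truncated_sums_lower_bound_general k hk J I hI hdisj ℓ hsum
end
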